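/- arXiv:1710.03845 — 8 statements merged into one kernel-verified Lean document; each statement's English description precedes it below -/
import Mathlib

section
/- Assume G : ℕ → ℕ is strictly increasing with G 1 = 1, and there is an integer s ≥ 2 such that G (i+1) ≤ s · G i for all i ≥ 1. For i ≥ 1 define A_i = ⋃_{m=0}^{G i − 1} [2π/((s+1)·G i) + 2π m/(G i), 2π s/((s+1)·G i) + 2π m/(G i)] ⊆ ℝ. Then for every n ≥ 2, the union ⋃_{i=1}^{n−1} A_i equals the closed interval [2π/((s+1)·G (n−1)), 2π·((s+1)·G (n−1) − 1)/((s+1)·G (n−1))]. -/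
/-!
The union up to level `k` is the interval `[2π/((s+1) G k), 2π - 2π/((s+1) G k)]`, symmetric
about `π`. The intervals of `A (k+1)` form an arithmetic progression of step `2π/G (k+1)`; the
first starts below and the last ends above the interval of level `k` (as `G k ≤ G (k+1)`),
and every gap between consecutive ones lies inside it: the first gap starts at
`2πs/((s+1) G (k+1)) ≥ 2π/((s+1) G k)` because `G (k+1) ≤ s G k`, and the last gap is its
mirror image.
-/

open Real Set

section LinearOrder

variable {α : Type*} [LinearOrder α]

theorem Icc_union_eq_Icc_of_ends_subset {a b c e g f : α} {T : Set α}
    (hca : c ≤ a) (hae : a ≤ e) (hgb : g ≤ b) (hbf : b ≤ f)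
    (hlow : Icc c e ⊆ T) (hhigh : Icc g f ⊆ T) (hT : T ⊆ Icc c f) :
    Icc a b ∪ T = Icc c f := by
  refine (union_subset (Icc_subset_Icc hca hbf) hT).antisymm fun x ⟨hcx, hxf⟩ => ?_
  rcases lt_or_ge x a with hxa | hax
  · exact Or.inr (hlow ⟨hcx, hxa.le.trans hae⟩)
  rcases le_or_gt x b with hxb | hbx
  · exact Or.inl ⟨hax, hxb⟩
  · exact Or.inr (hhigh ⟨hgb.trans hbx.le, hxf⟩)

end LinearOrder

section OrderedGroup

variable {α : Type*} [AddCommGroup α] [LinearOrder α] [IsOrderedAddMonoid α]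

theorem Icc_union_biUnion_Icc_add_eq {a b c e : α} {f : ℕ → α} (hf : Monotone f)
    (hf0 : f 0 = 0) {N : ℕ} (hN : N ≠ 0) (hca : c ≤ a) (hae : a ≤ e)
    (hb : c + f (N - 1) ≤ b) (hb' : b ≤ e + f (N - 1)) :
    Icc a b ∪ ⋃ m ∈ Finset.range N, Icc (c + f m) (e + f m) = Icc c (e + f (N - 1)) := by
  have hmem : ∀ m < N,
      Icc (c + f m) (e + f m) ⊆ ⋃ m ∈ Finset.range N, Icc (c + f m) (e + f m) :=
    fun m hm => subset_biUnion_of_mem (u := fun m ↦ Icc (c + f m) (e + f m)) (by simpa)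
  refine Icc_union_eq_Icc_of_ends_subset hca hae hb hb' ?_ (hmem _ (by omega)) ?_
  · simpa [hf0] using hmem 0 (Nat.pos_of_ne_zero hN)
  · refine iUnion₂_subset fun m hm => Icc_subset_Icc ?_ ?_
    · exact le_add_of_nonneg_right (hf0 ▸ hf (Nat.zero_le m))
    · gcongr
      exact hf (Nat.le_sub_one_of_lt (Finset.mem_range.1 hm))

end OrderedGroup

theorem Icc_union_biUnion_Icc_eq_of_le_mul (s g g' : ℕ) (hg : 0 < g) (hgg' : g ≤ g')
    (hg's : g' ≤ s * g) :
    Icc (2 * π / ((s + 1) * g)) (2 * π - 2 * π / ((s + 1) * g)) ∪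
      ⋃ m ∈ Finset.range g', Icc (2 * π / (((s : ℝ) + 1) * g') + 2 * π * m / g')
        (2 * π * s / (((s : ℝ) + 1) * g') + 2 * π * m / g') =
    Icc (2 * π / ((s + 1) * g')) (2 * π - 2 * π / ((s + 1) * g')) := by
  have hg' : 0 < g' := hg.trans_le hgg'
  have hg'sR : (g' : ℝ) ≤ s * g := by exact_mod_cast hg's
  have hlast : ((g' - 1 : ℕ) : ℝ) = g' - 1 := by rw [Nat.cast_sub hg', Nat.cast_one]
  have hstart : 2 * π / ((s + 1) * g') + 2 * π * ((g' - 1 : ℕ) : ℝ) / g' =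
      2 * π - 2 * π * s / ((s + 1) * g') := by
    rw [hlast]; field_simp; ring
  have hend : 2 * π * s / ((s + 1) * g') + 2 * π * ((g' - 1 : ℕ) : ℝ) / g' =
      2 * π - 2 * π / ((s + 1) * g') := by
    rw [hlast]; field_simp; ring
  have hca : 2 * π / ((s + 1) * g') ≤ 2 * π / ((s + 1) * (g : ℝ)) := by gcongr
  have hae : 2 * π / ((s + 1) * (g : ℝ)) ≤ 2 * π * s / ((s + 1) * g') := by
    rw [div_le_div_iff₀ (by positivity) (by positivity)]
    have := mul_le_mul_of_nonneg_left hg'sR (by positivity : (0 : ℝ) ≤ 2 * π * (s + 1))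
    linarith
  rw [← hend]
  refine Icc_union_biUnion_Icc_add_eq (f := fun m : ℕ => 2 * π * m / g') ?_ (by simp)
    hg'.ne' hca hae (by rw [hstart]; linarith) (by rw [hend]; linarith)
  intro m m' hmm'
  dsimp only
  gcongr

theorem union_Ai_eq_interval_general
    (G : ℕ → ℕ) (hG1 : G 1 = 1) (hmono : ∀ i, 1 ≤ i → G i < G (i + 1))
    (s : ℕ) (hs : ∀ i, 1 ≤ i → G (i + 1) ≤ s * G i)
    (A : ℕ → Set ℝ)
    (hA : ∀ i, 1 ≤ i → A i =
      ⋃ m ∈ Finset.range (G i),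
        Set.Icc (2 * π / (((s : ℝ) + 1) * G i) + 2 * π * m / G i)
          (2 * π * s / (((s : ℝ) + 1) * G i) + 2 * π * m / G i))
    (n : ℕ) (hn : 2 ≤ n) :
    (⋃ i ∈ Finset.Icc 1 (n - 1), A i) =
      Set.Icc (2 * π / (((s : ℝ) + 1) * G (n - 1)))
        (2 * π * (((s : ℝ) + 1) * G (n - 1) - 1) / (((s : ℝ) + 1) * G (n - 1))) := by
  have hGpos : ∀ k, 1 ≤ k → 0 < G k := fun k hk => by
    induction k, hk using Nat.le_induction with
    | base => simp [hG1]
    | succ k hk ih => exact ih.trans (hmono k hk)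
  obtain ⟨k, hk, rfl⟩ : ∃ k, 1 ≤ k ∧ n = k + 1 := ⟨n - 1, by omega, by omega⟩
  have hGR : ((s : ℝ) + 1) * G k ≠ 0 := by have := hGpos k hk; positivity
  rw [Nat.add_sub_cancel, mul_sub, mul_one, sub_div, mul_div_cancel_right₀ _ hGR]
  clear hn hGR
  induction k, hk using Nat.le_induction with
  | base =>
    rw [Finset.Icc_self, Finset.set_biUnion_singleton, hA 1 le_rfl, hG1, Finset.range_one,
      Finset.set_biUnion_singleton]
    congr 1 <;> field_simp <;> ring
  | succ k hk ih =>
    rw [← Finset.insert_Icc_right_eq_Icc_add_one (by omega), Finset.set_biUnion_insert,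
      union_comm, ih, hA _ (by omega)]
    exact Icc_union_biUnion_Icc_eq_of_le_mul s _ _ (hGpos k hk) (hmono k hk).le (hs k hk)

/-- The union of the sets `A i`, `1 ≤ i ≤ n-1`, is the closed interval
`[2π/((s+1) G (n-1)), 2π((s+1) G (n-1) - 1)/((s+1) G (n-1))]`. -/
theorem union_Ai_eq_interval
    (G : ℕ → ℕ) (hG1 : G 1 = 1) (hmono : ∀ i, 1 ≤ i → G i < G (i + 1))
    (s : ℕ) (hs2 : 2 ≤ s) (hs : ∀ i, 1 ≤ i → G (i + 1) ≤ s * G i)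
    (A : ℕ → Set ℝ)
    (hA : ∀ i, 1 ≤ i → A i =
      ⋃ m ∈ Finset.range (G i),
        Set.Icc (2 * π / (((s : ℝ) + 1) * G i) + 2 * π * m / G i)
          (2 * π * s / (((s : ℝ) + 1) * G i) + 2 * π * m / G i))
    (n : ℕ) (hn : 2 ≤ n) :
    (⋃ i ∈ Finset.Icc 1 (n - 1), A i) =
      Set.Icc (2 * π / (((s : ℝ) + 1) * G (n - 1)))
        (2 * π * (((s : ℝ) + 1) * G (n - 1) - 1) / (((s : ℝ) + 1) * G (n - 1))) :=
  union_Ai_eq_interval_general G hG1 hmono s hs A hA n hn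
end

section
/- Assume G : ℕ → ℕ is strictly increasing with G 1 = 1, and there is an integer s ≥ 2 such that G (i+1) ≤ s · G i for all i ≥ 1. For i ≥ 1 define A_i = ⋃_{m=0}^{G i − 1} [2π/((s+1)·G i) + 2π m/(G i), 2π s/((s+1)·G i) + 2π m/(G i)] ⊆ ℝ. Then for every n ≥ 2 and every k with 1 ≤ k ≤ G n − 1, the angle 2π k / (G n) lies in ⋃_{i=1}^{n−1} A_i; consequently, there exists j with 1 ≤ j ≤ n−1 such that the representative of 2π k · G j / (G n) modulo 2π lies in the interval [2π/(s+1), 2π s/(s+1)]. -/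
/-!
Rescale by `2π` and put `x = k / G n`; both claims say that some `x * G j` with `1 ≤ j < n` lies
within the band `[1/(s+1), s/(s+1)]` modulo `1`. If `x < 1/(s+1)`, the sequence `x * G j` starts
below the band at `j = 1`, ends at `x * G n = k ≥ 1` above it, and grows by a factor at most `s`
per step, so it cannot jump over the band, whose endpoints are in ratio `s`. The case
`x > s/(s+1)` reduces to this one through `x ↦ 1 - x`, under which the band is symmetric.
-/

open Real

theorem exists_mem_Ioc_mem_Icc_of_le_mul {t : ℕ → ℝ} {c a : ℝ} (hc : 0 ≤ c)
    (ht : ∀ i, 1 ≤ i → t (i + 1) ≤ c * t i) (h1 : t 1 < a) {n : ℕ} (hn : 1 ≤ n)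
    (han : a ≤ t n) : ∃ j ∈ Finset.Ioc 1 n, t j ∈ Set.Icc a (c * a) := by
  induction n, hn using Nat.le_induction with
  | base => exact absurd han (not_le.2 h1)
  | succ n hn ih =>
    by_cases h : a ≤ t n
    · obtain ⟨j, hj, hjt⟩ := ih h
      exact ⟨j, Finset.Ioc_subset_Ioc_right n.le_succ hj, hjt⟩
    · exact ⟨n + 1, Finset.mem_Ioc.2 ⟨by omega, le_rfl⟩, han,
        (ht n hn).trans (mul_le_mul_of_nonneg_left (not_le.1 h).le hc)⟩

/-- The arc `[2π/(s+1), 2πs/(s+1)]` of the statement, rescaled by `1/(2π)`. -/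
def band (s : ℕ) : Set ℝ := Set.Icc (1 / (s + 1)) (s / (s + 1))

theorem one_sub_mem_band {s : ℕ} {y : ℝ} (hy : y ∈ band s) : 1 - y ∈ band s := by
  have e : (1 : ℝ) - 1 / (s + 1) = s / (s + 1) := by field_simp; ring
  obtain ⟨h₁, h₂⟩ := hy
  constructor <;> linarith

section Growth

variable {G : ℕ → ℕ} {s : ℕ}

theorem exists_mul_mem_band_of_lt (hG1 : G 1 = 1) (hs : ∀ i, 1 ≤ i → G (i + 1) ≤ s * G i)
    {n : ℕ} (hn : 1 ≤ n) {x : ℝ} (hx : x < 1 / (s + 1)) (hxn : 1 ≤ x * G n) :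
    ∃ j ∈ Finset.Icc 1 (n - 1), 0 < G j ∧ x * G j ∈ band s := by
  have hx0 : 0 ≤ x := (pos_of_mul_pos_left (one_pos.trans_le hxn) (G n).cast_nonneg).le
  have hgrowth : ∀ i, 1 ≤ i → x * G (i + 1) ≤ s * (x * G i) := fun i hi => by
    have : (G (i + 1) : ℝ) ≤ s * G i := by exact_mod_cast hs i hi
    nlinarith
  have ha : (0 : ℝ) < 1 / (s + 1) := by positivity
  have ha1 : 1 / ((s : ℝ) + 1) ≤ 1 := by
    rw [div_le_one (by positivity)]; linarith [s.cast_nonneg (α := ℝ)]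
  have hsa : (s : ℝ) * (1 / (s + 1)) < 1 := by
    rw [mul_one_div, div_lt_one (by positivity)]; linarith
  obtain ⟨j, hj, hmem⟩ := exists_mem_Ioc_mem_Icc_of_le_mul (t := fun i => x * G i) s.cast_nonneg
    hgrowth (by simpa [hG1] using hx) hn (ha1.trans hxn)
  obtain ⟨hj1, hjn⟩ := Finset.mem_Ioc.1 hj
  have hjn' : j ≠ n := by rintro rfl; linarith [hmem.2]
  have hGj : 0 < G j := Nat.pos_of_ne_zero fun h => by simp [h] at hmem; linarith [hmem.1]
  refine ⟨j, Finset.mem_Icc.2 ⟨by omega, by omega⟩, hGj, ?_⟩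
  simpa only [band, mul_one_div] using hmem

theorem exists_mul_sub_mem_band (hG1 : G 1 = 1) (hs : ∀ i, 1 ≤ i → G (i + 1) ≤ s * G i)
    {n : ℕ} (hn : 2 ≤ n) {x : ℝ} (hx : 1 ≤ x * G n) (hx' : 1 ≤ (1 - x) * G n) :
    ∃ j ∈ Finset.Icc 1 (n - 1), ∃ m < G j, x * G j - m ∈ band s := by
  by_cases hlo : x < 1 / (s + 1)
  · obtain ⟨j, hj, hGj, hmem⟩ := exists_mul_mem_band_of_lt hG1 hs (by omega) hlo hx
    exact ⟨j, hj, 0, hGj, by simpa using hmem⟩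
  by_cases hhi : s / (s + 1) < x
  · have hlo' : 1 - x < 1 / (s + 1) := by
      have e : (1 : ℝ) - s / (s + 1) = 1 / (s + 1) := by field_simp; ring
      linarith
    obtain ⟨j, hj, hGj, hmem⟩ := exists_mul_mem_band_of_lt hG1 hs (by omega) hlo' hx'
    refine ⟨j, hj, G j - 1, by omega, ?_⟩
    convert one_sub_mem_band hmem using 1
    rw [Nat.cast_pred hGj]; ring
  · exact ⟨1, Finset.mem_Icc.2 ⟨le_rfl, by omega⟩, 0, by omega,
      by simpa [hG1] using ⟨not_lt.1 hlo, not_lt.1 hhi⟩⟩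

end Growth

theorem angle_mem_union_Ai_general
    (G : ℕ → ℕ) (hG1 : G 1 = 1)
    (s : ℕ) (hs : ∀ i, 1 ≤ i → G (i + 1) ≤ s * G i)
    (A : ℕ → Set ℝ)
    (hA : ∀ i, 1 ≤ i → A i =
      ⋃ m ∈ Finset.range (G i),
        Set.Icc (2 * π / (((s : ℝ) + 1) * G i) + 2 * π * m / G i)
          (2 * π * s / (((s : ℝ) + 1) * G i) + 2 * π * m / G i))
    (n : ℕ) (hn : 2 ≤ n) (k : ℕ) (hk1 : 1 ≤ k) (hk2 : k ≤ G n - 1) :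
    (2 * π * k / G n) ∈ ⋃ i ∈ Finset.Icc 1 (n - 1), A i ∧
      ∃ j, 1 ≤ j ∧ j ≤ n - 1 ∧ ∃ q : ℤ,
        2 * π * k * G j / G n - 2 * π * q ∈
          Set.Icc (2 * π / ((s : ℝ) + 1)) (2 * π * s / ((s : ℝ) + 1)) := by
  have hN : (G n : ℝ) ≠ 0 := by exact_mod_cast (show G n ≠ 0 by omega)
  have hkN : (k : ℝ) + 1 ≤ G n := by exact_mod_cast (show k + 1 ≤ G n by omega)
  obtain ⟨j, hj, m, hm, hmem⟩ := exists_mul_sub_mem_band (x := k / G n) hG1 hs hn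
    (by rw [div_mul_cancel₀ _ hN]; exact_mod_cast hk1)
    (by rw [sub_mul, div_mul_cancel₀ _ hN, one_mul]; linarith)
  have hGj : (G j : ℝ) ≠ 0 := by exact_mod_cast (show G j ≠ 0 by omega)
  obtain ⟨hj1, hjn⟩ := Finset.mem_Icc.1 hj
  constructor
  · refine Set.mem_iUnion₂.2 ⟨j, hj, ?_⟩
    rw [hA j hj1]
    refine Set.mem_iUnion₂.2 ⟨m, Finset.mem_range.2 hm, ?_⟩
    have := Set.mem_image_of_mem (fun y => 2 * π / G j * y + 2 * π * m / G j) hmem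
    rw [band, Set.image_affine_Icc' (by positivity)] at this
    rw [Set.mem_Icc] at this ⊢
    convert this using 2 <;> field_simp <;> ring
  · refine ⟨j, hj1, hjn, m, ?_⟩
    have := Set.mem_image_of_mem (fun y => 2 * π * y) hmem
    rw [band, Set.image_mul_left_Icc' (by positivity)] at this
    rw [Set.mem_Icc] at this ⊢
    convert this using 2 <;> push_cast <;> field_simp

/-- Every angle `2πk/G n` (for `1 ≤ k ≤ G n - 1`) lies in `⋃_{i=1}^{n-1} A i`, and
consequently for some `j` with `1 ≤ j ≤ n-1` the representative of `2πk G j / G n`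
modulo `2π` lies in `[2π/(s+1), 2πs/(s+1)]`. -/
theorem angle_mem_union_Ai
    (G : ℕ → ℕ) (hG1 : G 1 = 1) (hmono : ∀ i, 1 ≤ i → G i < G (i + 1))
    (s : ℕ) (hs2 : 2 ≤ s) (hs : ∀ i, 1 ≤ i → G (i + 1) ≤ s * G i)
    (A : ℕ → Set ℝ)
    (hA : ∀ i, 1 ≤ i → A i =
      ⋃ m ∈ Finset.range (G i),
        Set.Icc (2 * π / (((s : ℝ) + 1) * G i) + 2 * π * m / G i)
          (2 * π * s / (((s : ℝ) + 1) * G i) + 2 * π * m / G i))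
    (n : ℕ) (hn : 2 ≤ n) (k : ℕ) (hk1 : 1 ≤ k) (hk2 : k ≤ G n - 1) :
    (2 * π * k / G n) ∈ ⋃ i ∈ Finset.Icc 1 (n - 1), A i ∧
      ∃ j, 1 ≤ j ∧ j ≤ n - 1 ∧ ∃ q : ℤ,
        2 * π * k * G j / G n - 2 * π * q ∈
          Set.Icc (2 * π / ((s : ℝ) + 1)) (2 * π * s / ((s : ℝ) + 1)) :=
  angle_mem_union_Ai_general G hG1 s hs A hA n hn k hk1 hk2
end

section
/- Assume G : ℕ → ℕ is strictly increasing with G 1 = 1, and there is an integer s ≥ 2 such that G (i+1) ≤ s · G i for all i ≥ 1. Fix n ≥ 2, set m = G n, and let λ_k = (1/n)·Σ_{i=1}^{n} exp(2π I k G i / m) where I = √(-1). Then for every k with 1 ≤ k ≤ m − 1, the eigenvalue modulus satisfies |λ_k| ≤ 1 − (2/n)·(1 − |cos(π/(s+1))|). -/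
open Finset Real

/-!
The `n`-th summand is `1`. Replacing `k` by `m - k` changes `|cos (π k G j / m)|` at most by
sign, so we may take `2k ≤ m`. Since `G` grows by a factor at most `s` per step, the first `j` with
`(s + 1) k G j ≥ m` has `k G j / m ∈ [1/(s+1), s/(s+1)]`, whence
`‖e^{2πi k G j / m} + 1‖ = 2 |cos (π k G j / m)| ≤ 2 cos (π/(s+1))`; the remaining `n - 2`
summands have modulus `1`.
-/

theorem exists_le_and_le_mul_of_succ_le_mul {b : ℕ → ℕ} {s M N : ℕ}
    (hb : ∀ i, 1 ≤ i → b (i + 1) ≤ s * b i) (h1 : b 1 ≤ s * M) (hN : 1 ≤ N) (hMN : M ≤ b N) :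
    ∃ j, 1 ≤ j ∧ j ≤ N ∧ M ≤ b j ∧ b j ≤ s * M := by
  induction N, hN using Nat.le_induction with
  | base => exact ⟨1, le_rfl, le_rfl, hMN, h1⟩
  | succ N hN ih =>
    by_cases hM : M ≤ b N
    · obtain ⟨j, hj1, hjN, hj⟩ := ih hM
      exact ⟨j, hj1, hjN.trans N.le_succ, hj⟩
    · exact ⟨N + 1, by omega, le_rfl, hMN,
        (hb N hN).trans (Nat.mul_le_mul_left s (by omega))⟩

theorem exists_index_mul_mem_Icc {G : ℕ → ℕ} (hG1 : G 1 = 1) {s : ℕ} (hs1 : 1 ≤ s)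
    (hs : ∀ i, 1 ≤ i → G (i + 1) ≤ s * G i) {n k : ℕ} (hn : 1 ≤ n) (hk1 : 1 ≤ k)
    (hk : 2 * k ≤ G n) :
    ∃ j, 1 ≤ j ∧ j < n ∧ G n ≤ (s + 1) * k * G j ∧ (s + 1) * k * G j ≤ s * G n := by
  obtain ⟨j, hj1, hjn, hlow, hupp⟩ :=
    exists_le_and_le_mul_of_succ_le_mul (b := fun i => (s + 1) * k * G i) (s := s) (M := G n)
      (fun i hi => (Nat.mul_le_mul_left _ (hs i hi)).trans_eq (by ring))
      (by simp only [hG1]; nlinarith) hn (Nat.le_mul_of_pos_left _ (by positivity))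
  refine ⟨j, hj1, lt_of_le_of_ne hjn ?_, hlow, hupp⟩
  rintro rfl
  nlinarith

theorem abs_cos_pi_mul_le_of_mem_Icc {c x : ℝ} (hc : 0 ≤ c) (hcx : c ≤ x) (hx : x ≤ 1 - c) :
    |cos (π * x)| ≤ cos (π * c) := by
  have hπ := pi_pos
  refine abs_le.2 ⟨?_, ?_⟩
  · rw [neg_le, ← cos_pi_sub, ← mul_one_sub]
    exact cos_le_cos_of_nonneg_of_le_pi (by positivity) (by nlinarith) (by nlinarith)
  · exact cos_le_cos_of_nonneg_of_le_pi (by positivity) (by nlinarith) (by nlinarith)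

theorem exists_index_abs_cos_le {G : ℕ → ℕ} (hG1 : G 1 = 1) {s : ℕ} (hs1 : 1 ≤ s)
    (hs : ∀ i, 1 ≤ i → G (i + 1) ≤ s * G i) {n k : ℕ} (hn : 1 ≤ n) (hk1 : 1 ≤ k)
    (hkn : k < G n) :
    ∃ j, 1 ≤ j ∧ j < n ∧ |cos (π * (k * G j / G n))| ≤ cos (π / (s + 1)) := by
  wlog hk : 2 * k ≤ G n generalizing k
  · obtain ⟨j, hj1, hjn, hcos⟩ := this (k := G n - k) (by omega) (by omega) (by omega)
    refine ⟨j, hj1, hjn, ?_⟩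
    have hGn : (G n : ℝ) ≠ 0 := by exact_mod_cast (by omega : G n ≠ 0)
    rwa [Nat.cast_sub hkn.le, sub_mul, sub_div, mul_div_right_comm, div_self hGn, one_mul,
      mul_sub, mul_comm π, cos_nat_mul_pi_sub, abs_mul, abs_pow, abs_neg, abs_one, one_pow,
      one_mul] at hcos
  obtain ⟨j, hj1, hjn, hlow, hupp⟩ := exists_index_mul_mem_Icc hG1 hs1 hs hn hk1 hk
  refine ⟨j, hj1, hjn, ?_⟩
  have hGn : (0 : ℝ) < G n := by exact_mod_cast (by omega : 0 < G n)
  have hs0 : (0 : ℝ) < s + 1 := by positivity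
  have hlow' : (G n : ℝ) ≤ (s + 1) * k * G j := by exact_mod_cast hlow
  have hupp' : (s + 1) * k * (G j : ℝ) ≤ s * G n := by exact_mod_cast hupp
  rw [← mul_one_div π]
  apply abs_cos_pi_mul_le_of_mem_Icc (by positivity)
  · rw [div_le_div_iff₀ hs0 hGn]; linarith
  · rw [div_le_iff₀ hGn, one_sub_div hs0.ne', add_sub_cancel_right, div_mul_eq_mul_div,
      le_div_iff₀ hs0]
    linarith

theorem Complex.norm_exp_I_mul_ofReal_add_one (x : ℝ) :
    ‖Complex.exp (Complex.I * x) + 1‖ = 2 * |Real.cos (x / 2)| := by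
  have h : Complex.exp (Complex.I * x) + 1 = -(Complex.exp (Complex.I * ↑(x + π)) - 1) := by
    rw [ofReal_add, mul_add, exp_add, mul_comm I (π : ℂ), exp_pi_mul_I]
    ring
  rw [h, norm_neg, norm_exp_I_mul_ofReal_sub_one, add_div, Real.sin_add_pi_div_two, norm_mul,
    Real.norm_eq_abs, Real.norm_eq_abs, abs_two]

theorem norm_sum_le_card_sub_two_add_norm_add {ι E : Type*} [DecidableEq ι]
    [SeminormedAddCommGroup E] {t : Finset ι} {f : ι → E} (hf : ∀ l ∈ t, ‖f l‖ ≤ 1) {i j : ι}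
    (hi : i ∈ t) (hj : j ∈ t) (hij : i ≠ j) :
    ‖∑ l ∈ t, f l‖ ≤ #t - 2 + ‖f i + f j‖ := by
  have hj' : j ∈ t.erase i := mem_erase.2 ⟨hij.symm, hj⟩
  rw [← add_sum_erase t f hi, ← add_sum_erase _ f hj', ← add_assoc, add_comm]
  calc ‖∑ l ∈ (t.erase i).erase j, f l + (f i + f j)‖
      ≤ ∑ l ∈ (t.erase i).erase j, ‖f l‖ + ‖f i + f j‖ :=
        (norm_add_le _ _).trans (by gcongr; exact norm_sum_le _ _)
    _ ≤ #((t.erase i).erase j) • (1 : ℝ) + ‖f i + f j‖ := by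
        gcongr
        exact sum_le_card_nsmul _ _ _ fun l hl => hf l (mem_of_mem_erase (mem_of_mem_erase hl))
    _ = #t - 2 + ‖f i + f j‖ := by
        rw [nsmul_one, ← card_erase_add_one hi, ← card_erase_add_one hj']
        push_cast
        ring

theorem eigenvalue_modulus_upper_bound_general
    (G : ℕ → ℕ) (hG1 : G 1 = 1)
    (s : ℕ) (hs2 : 2 ≤ s) (hs : ∀ i, 1 ≤ i → G (i + 1) ≤ s * G i)
    (n : ℕ) (hn : 2 ≤ n) (m : ℕ) (hm : m = G n)
    (k : ℕ) (hk1 : 1 ≤ k) (hk2 : k ≤ m - 1) :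
    ‖(1 / n : ℂ) *
        ∑ i ∈ Finset.Icc 1 n, Complex.exp (2 * π * Complex.I * k * G i / m)‖ ≤
      1 - (2 / n) * (1 - |Real.cos (π / ((s : ℝ) + 1))|) := by
  subst hm
  have hGn : (G n : ℝ) ≠ 0 := by exact_mod_cast (by omega : G n ≠ 0)
  obtain ⟨j, hj1, hjn, hcos⟩ :=
    exists_index_abs_cos_le hG1 (by omega) hs (by omega : 1 ≤ n) hk1 (by omega)
  set θ : ℕ → ℝ := fun i => 2 * π * (k * G i / G n)
  have hsummand (i : ℕ) :
      Complex.exp (2 * π * Complex.I * k * G i / G n) = Complex.exp (Complex.I * θ i) := by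
    simp only [θ]; push_cast; ring_nf
  have hθn : Complex.exp (Complex.I * θ n) = 1 := by
    rw [show Complex.I * θ n = k * (2 * π * Complex.I) by
      simp only [θ, mul_div_assoc, div_self hGn, mul_one]; push_cast; ring]
    exact Complex.exp_nat_mul_two_pi_mul_I k
  have hpair : ‖Complex.exp (Complex.I * θ j) + Complex.exp (Complex.I * θ n)‖ ≤
      2 * |Real.cos (π / (s + 1))| := by
    rw [hθn, Complex.norm_exp_I_mul_ofReal_add_one, mul_div_right_comm,
      mul_div_cancel_left₀ _ two_ne_zero]
    linarith [le_abs_self (Real.cos (π / (s + 1)))]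
  have hsum := norm_sum_le_card_sub_two_add_norm_add (t := Icc 1 n)
    (fun i _ => (Complex.norm_exp_I_mul_ofReal (θ i)).le)
    (mem_Icc.2 ⟨hj1, hjn.le⟩) (mem_Icc.2 ⟨by omega, le_rfl⟩) hjn.ne
  rw [Nat.card_Icc, add_tsub_cancel_right] at hsum
  have hn0 : (0 : ℝ) < n := by positivity
  calc ‖(1 / n : ℂ) * ∑ i ∈ Icc 1 n, Complex.exp (2 * π * Complex.I * k * G i / G n)‖
      = 1 / n * ‖∑ i ∈ Icc 1 n, Complex.exp (Complex.I * θ i)‖ := by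
        simp only [hsummand, norm_mul, norm_div, norm_one, Complex.norm_natCast]
    _ ≤ 1 / n * (n - 2 + 2 * |Real.cos (π / (s + 1))|) := by gcongr; linarith
    _ = 1 - (2 / n) * (1 - |Real.cos (π / ((s : ℝ) + 1))|) := by field_simp; ring

/-- Upper bound on the moduli of the nontrivial eigenvalues of the random walk
determined by a linear recurrence: `|λ_k| ≤ 1 - (2/n)(1 - |cos(π/(s+1))|)`. -/
theorem eigenvalue_modulus_upper_bound
    (G : ℕ → ℕ) (hG1 : G 1 = 1) (hmono : ∀ i, 1 ≤ i → G i < G (i + 1))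
    (s : ℕ) (hs2 : 2 ≤ s) (hs : ∀ i, 1 ≤ i → G (i + 1) ≤ s * G i)
    (n : ℕ) (hn : 2 ≤ n) (m : ℕ) (hm : m = G n)
    (k : ℕ) (hk1 : 1 ≤ k) (hk2 : k ≤ m - 1) :
    ‖(1 / n : ℂ) *
        ∑ i ∈ Finset.Icc 1 n, Complex.exp (2 * π * Complex.I * k * G i / m)‖ ≤
      1 - (2 / n) * (1 - |Real.cos (π / ((s : ℝ) + 1))|) :=
  eigenvalue_modulus_upper_bound_general G hG1 s hs2 hs n hn m hm k hk1 hk2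
end

section
/- Fix a sequence of positive integers G 1, …, G n with n ≥ 1 and set m = G n with m ≥ 2. Let μ : ZMod m → ℝ, μ x = (1/n)·card{i ∈ Finset.Icc 1 n : (G i : ZMod m) = x}; let p 0 be the indicator of 0 ∈ ZMod m and p (t+1) x = Σ_{y ∈ ZMod m} p t y · μ (x − y); let π x = 1/m; and let λ_k = (1/n)·Σ_{i=1}^{n} exp(2π I k G i / m) where I = √(-1). Then for every t ≥ 1, ((1/2)·Σ_{x ∈ ZMod m} |p t x − π x|)² ≤ (1/4)·Σ_{k=1}^{m−1} |λ_k|^{2t}. -/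
open Finset Real

/-- Step distribution of the random walk on `ℤ_m` with steps drawn uniformly from
`{G 1, …, G n}`. -/
noncomputable def stepDist (G : ℕ → ℕ) (n m : ℕ) [NeZero m] (x : ZMod m) : ℝ :=
  (1 / n : ℝ) * ((Finset.Icc 1 n).filter (fun i => (G i : ZMod m) = x)).card

/-- `t`-step distribution of the random walk started at `0`. -/
noncomputable def walkDist (G : ℕ → ℕ) (n m : ℕ) [NeZero m] : ℕ → ZMod m → ℝ
  | 0 => fun x => if x = 0 then 1 else 0
  | t + 1 => fun x => ∑ y : ZMod m, walkDist G n m t y * stepDist G n m (x - y)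

/-!
Fourier analysis on `ZMod m`. By Cauchy–Schwarz, `(∑ₓ |pₜ x - π x|)² ≤ m ∑ₓ |pₜ x - π x|²`, and by
Plancherel the right-hand side is `∑ₖ |𝓕 (pₜ - π) k|²`. Since `pₜ` is the `t`-fold convolution of
`μ`, `𝓕 pₜ = (𝓕 μ)ᵗ`. At `k = 0` both `𝓕 pₜ` and `𝓕 π` equal `1`, and `𝓕 π` vanishes elsewhere, so
only the terms `|𝓕 μ k|^(2t)` with `k ≠ 0` survive. Finally `|𝓕 μ k| = |λₖ|`: Mathlib's `𝓕` uses
the kernel `e(-jk)`, so `λₖ = 𝓕 μ (-k)`, the complex conjugate of `𝓕 μ k` because `μ` is real.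
-/

namespace ZMod

open scoped ComplexConjugate

variable {N : ℕ} [NeZero N]

lemma dft_conv (f g : ZMod N → ℂ) (k : ZMod N) :
    𝓕 (fun x ↦ ∑ y, f y * g (x - y)) k = 𝓕 f k * 𝓕 g k := by
  have shift (y : ZMod N) :
      ∑ x, stdAddChar (-(x * k)) * g (x - y) = stdAddChar (-(y * k)) * 𝓕 g k := by
    rw [dft_apply, mul_sum, ← Equiv.sum_comp (Equiv.addRight y)]
    refine sum_congr rfl fun x _ ↦ ?_
    rw [Equiv.coe_addRight, add_sub_cancel_right, smul_eq_mul,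
      show -((x + y) * k) = -(y * k) + -(x * k) by ring, AddChar.map_add_eq_mul, mul_assoc]
  calc 𝓕 (fun x ↦ ∑ y, f y * g (x - y)) k
      = ∑ y, f y * ∑ x, stdAddChar (-(x * k)) * g (x - y) := by
        simp only [dft_apply, smul_eq_mul, mul_sum]
        rw [sum_comm]
        exact sum_congr rfl fun y _ ↦ sum_congr rfl fun x _ ↦ by ring
    _ = 𝓕 f k * 𝓕 g k := by
        simp only [shift, dft_apply, smul_eq_mul, sum_mul]
        exact sum_congr rfl fun y _ ↦ by ring

lemma dft_const (c : ℂ) (k : ZMod N) :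
    𝓕 (fun _ ↦ c) k = if k = 0 then N * c else 0 := by
  simp only [dft_apply, smul_eq_mul, ← sum_mul, ← mul_neg,
    AddChar.sum_mulShift _ (isPrimitive_stdAddChar N), neg_eq_zero]
  simp [ZMod.card]

lemma dft_neg_ofReal (f : ZMod N → ℝ) (k : ZMod N) :
    𝓕 (fun x ↦ (f x : ℂ)) (-k) = conj (𝓕 (fun x ↦ (f x : ℂ)) k) := by
  simp only [dft_apply, smul_eq_mul, map_sum, map_mul, Complex.conj_ofReal,
    ← AddChar.map_neg_eq_conj, mul_neg]

lemma sum_norm_sq_dft (f : ZMod N → ℂ) :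
    ∑ k, ‖𝓕 f k‖ ^ 2 = N * ∑ x, ‖f x‖ ^ 2 := by
  suffices h : ∑ k, 𝓕 f k * conj (𝓕 f k) = N * ∑ x, f x * conj (f x) by
    simp only [Complex.mul_conj'] at h
    exact_mod_cast h
  have expand (k : ZMod N) : 𝓕 f k * conj (𝓕 f k) =
      ∑ x, ∑ y, f x * conj (f y) * stdAddChar (k * (y - x)) := by
    simp only [dft_apply, smul_eq_mul, map_sum, map_mul, ← AddChar.map_neg_eq_conj, neg_neg,
      sum_mul_sum]
    refine sum_congr rfl fun x _ ↦ sum_congr rfl fun y _ ↦ ?_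
    rw [show k * (y - x) = -(x * k) + y * k by ring, AddChar.map_add_eq_mul]
    ring
  calc ∑ k, 𝓕 f k * conj (𝓕 f k)
      = ∑ x, ∑ y, f x * conj (f y) * ∑ k, stdAddChar (k * (y - x)) := by
        simp only [expand, mul_sum]
        rw [sum_comm]
        exact sum_congr rfl fun x _ ↦ sum_comm
    _ = N * ∑ x, f x * conj (f x) := by
        simp [AddChar.sum_mulShift _ (isPrimitive_stdAddChar N), sub_eq_zero, mul_sum, mul_comm]

lemma sum_natCast_Icc_eq_sum_erase_zero {M : Type*} [AddCommMonoid M] (F : ZMod N → M) :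
    ∑ k ∈ Icc 1 (N - 1), F k = ∑ k ∈ univ.erase 0, F k := by
  have hN := NeZero.pos N
  refine sum_nbij (fun k ↦ (k : ZMod N)) (fun k hk ↦ ?_) (fun k hk l hl h ↦ ?_) (fun k hk ↦ ?_)
    fun _ _ ↦ rfl
  · rw [mem_Icc] at hk
    rw [mem_erase, Ne, natCast_eq_zero_iff]
    exact ⟨fun h ↦ absurd (Nat.le_of_dvd (by omega) h) (by omega), mem_univ _⟩
  · rw [coe_Icc, Set.mem_Icc] at hk hl
    rwa [natCast_eq_natCast_iff', Nat.mod_eq_of_lt (by omega), Nat.mod_eq_of_lt (by omega)] at h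
  · have hk0 : k.val ≠ 0 := by rw [Ne, val_eq_zero]; exact ne_of_mem_erase hk
    have := val_lt k
    exact ⟨k.val, by simp only [coe_Icc, Set.mem_Icc]; omega, natCast_zmod_val k⟩

end ZMod

open ZMod

section Walk

variable (G : ℕ → ℕ) (n m : ℕ) [NeZero m]

lemma sum_stepDist (hn : 0 < n) : ∑ x : ZMod m, stepDist G n m x = 1 := by
  have hcard : ∑ x : ZMod m, ((Icc 1 n).filter (fun i ↦ (G i : ZMod m) = x)).card = n := by
    rw [← card_eq_sum_card_fiberwise fun i _ ↦ mem_univ _, Nat.card_Icc, Nat.add_sub_cancel]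
  simp only [stepDist, ← mul_sum, ← Nat.cast_sum, hcard]
  field_simp

lemma dft_walkDist (t : ℕ) (k : ZMod m) :
    𝓕 (fun x ↦ (walkDist G n m t x : ℂ)) k = 𝓕 (fun x ↦ (stepDist G n m x : ℂ)) k ^ t := by
  induction t with
  | zero => simp [walkDist, dft_apply, apply_ite (fun r : ℝ ↦ (r : ℂ))]
  | succ t ih =>
    simp only [walkDist, Complex.ofReal_sum, Complex.ofReal_mul]
    rw [pow_succ, ← ih]
    exact dft_conv (fun y ↦ (walkDist G n m t y : ℂ)) (fun z ↦ (stepDist G n m z : ℂ)) k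

lemma dft_walkDist_sub_uniform (hn : 0 < n) (t : ℕ) (k : ZMod m) :
    𝓕 (fun x ↦ ((walkDist G n m t x - 1 / m : ℝ) : ℂ)) k =
      if k = 0 then 0 else 𝓕 (fun x ↦ (stepDist G n m x : ℂ)) k ^ t := by
  have hsplit : (fun x ↦ ((walkDist G n m t x - 1 / m : ℝ) : ℂ)) =
      (fun x ↦ (walkDist G n m t x : ℂ)) - fun _ ↦ (1 / m : ℂ) := by
    ext x; push_cast; rfl
  rw [hsplit, map_sub, Pi.sub_apply, dft_walkDist, dft_const]
  split_ifs with hk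
  · rw [hk, dft_apply_zero, ← Complex.ofReal_sum, sum_stepDist G n m hn]
    simp
  · rw [sub_zero]

lemma sum_norm_sq_dft_walkDist_sub_uniform (hn : 0 < n) (t : ℕ) :
    ∑ k, ‖𝓕 (fun x ↦ ((walkDist G n m t x - 1 / m : ℝ) : ℂ)) k‖ ^ 2 =
      ∑ k ∈ univ.erase 0, ‖𝓕 (fun x ↦ (stepDist G n m x : ℂ)) k‖ ^ (2 * t) := by
  rw [← add_sum_erase _ _ (mem_univ 0), dft_walkDist_sub_uniform G n m hn, if_pos rfl,
    norm_zero, zero_pow two_ne_zero, zero_add]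
  refine sum_congr rfl fun k hk ↦ ?_
  rw [dft_walkDist_sub_uniform G n m hn, if_neg (ne_of_mem_erase hk), norm_pow, ← pow_mul,
    mul_comm]

lemma dft_stepDist (k : ZMod m) :
    𝓕 (fun x ↦ (stepDist G n m x : ℂ)) k =
      (1 / n : ℂ) * ∑ i ∈ Icc 1 n, stdAddChar (-((G i : ZMod m) * k)) := by
  rw [dft_apply, mul_sum,
    ← sum_fiberwise' (Icc 1 n) (fun i ↦ (G i : ZMod m)) fun x ↦ 1 / n * stdAddChar (-(x * k))]
  refine sum_congr rfl fun x _ ↦ ?_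
  rw [sum_const, stepDist, nsmul_eq_mul, smul_eq_mul]
  push_cast
  ring

lemma norm_dft_stepDist_natCast (k : ℕ) :
    ‖𝓕 (fun x ↦ (stepDist G n m x : ℂ)) k‖ =
      ‖(1 / n : ℂ) * ∑ i ∈ Icc 1 n, Complex.exp (2 * π * Complex.I * k * G i / m)‖ := by
  rw [← Complex.norm_conj, ← dft_neg_ofReal, dft_stepDist]
  congr 3 with i
  rw [mul_neg, neg_neg, ← Nat.cast_mul, stdAddChar_apply, toCircle_natCast]
  push_cast
  ring_nf

end Walk

theorem upper_bound_lemma_general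
    (G : ℕ → ℕ) (n : ℕ) (hn : 1 ≤ n)
    (m : ℕ) [NeZero m] (t : ℕ) :
    ((1 / 2 : ℝ) * ∑ x : ZMod m, |walkDist G n m t x - 1 / m|) ^ 2 ≤
      (1 / 4 : ℝ) * ∑ k ∈ Finset.Icc 1 (m - 1),
        (‖(1 / n : ℂ) *
          ∑ i ∈ Finset.Icc 1 n, Complex.exp (2 * π * Complex.I * k * G i / m)‖) ^ (2 * t) := by
  have cauchy_schwarz : (∑ x : ZMod m, |walkDist G n m t x - 1 / m|) ^ 2 ≤
      m * ∑ x : ZMod m, ‖((walkDist G n m t x - 1 / m : ℝ) : ℂ)‖ ^ 2 := by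
    simpa only [Complex.norm_real, Real.norm_eq_abs, card_univ, ZMod.card] using
      sq_sum_le_card_mul_sum_sq (s := univ) (f := fun x ↦ |walkDist G n m t x - 1 / m|)
  calc ((1 / 2 : ℝ) * ∑ x : ZMod m, |walkDist G n m t x - 1 / m|) ^ 2
      = 1 / 4 * (∑ x : ZMod m, |walkDist G n m t x - 1 / m|) ^ 2 := by ring
    _ ≤ 1 / 4 * (m * ∑ x : ZMod m, ‖((walkDist G n m t x - 1 / m : ℝ) : ℂ)‖ ^ 2) := by
      gcongr
    _ = 1 / 4 * ∑ k ∈ univ.erase 0, ‖𝓕 (fun x ↦ (stepDist G n m x : ℂ)) k‖ ^ (2 * t) := by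
      rw [← sum_norm_sq_dft, sum_norm_sq_dft_walkDist_sub_uniform G n m hn]
    _ = _ := by
      simp only [← sum_natCast_Icc_eq_sum_erase_zero, norm_dft_stepDist_natCast]

/-- Upper Bound Lemma (Diaconis–Shahshahani) for the random walk on `ℤ_m`
determined by the sequence `G 1, …, G n`. -/
theorem upper_bound_lemma
    (G : ℕ → ℕ) (n : ℕ) (hn : 1 ≤ n) (hGpos : ∀ i, 1 ≤ i → i ≤ n → 0 < G i)
    (m : ℕ) [NeZero m] (hm : m = G n) (hm2 : 2 ≤ m) (t : ℕ) (ht : 1 ≤ t) :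
    ((1 / 2 : ℝ) * ∑ x : ZMod m, |walkDist G n m t x - 1 / m|) ^ 2 ≤
      (1 / 4 : ℝ) * ∑ k ∈ Finset.Icc 1 (m - 1),
        (‖(1 / n : ℂ) *
          ∑ i ∈ Finset.Icc 1 n, Complex.exp (2 * π * Complex.I * k * G i / m)‖) ^ (2 * t) :=
  upper_bound_lemma_general G n hn m t
end

section
/- Let G : ℕ → ℕ be a sequence of positive integers with G i ≤ G (i+1) for all i, fix n ≥ 2, set m = G n, and let λ_1 = (1/n)·Σ_{i=1}^{n} exp(2π I G i / m) where I = √(-1). Let M = card{i ∈ Finset.Icc 1 (n−1) : n · G i > G n}. Then |λ_1| ≥ 1 − 2M/n − 2π²/n². -/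
/-!
Only the real part of `λ_1` is estimated, a sum of `cos (2π G i / G n)`. The top term is `cos 2π = 1`.
For `i < n` with `n G i ≤ G n` the angle lies in `[0, 2π/n]`, so `1 - θ²/2 ≤ cos θ` gives the term
at least `1 - 2π²/n²`; each of the `M` remaining terms is at least `-1`, which is at most `2` below that bound.
-/

open Finset Real

lemma one_sub_sq_div_two_le_cos_of_abs_le {x y : ℝ} (h : |x| ≤ y) : 1 - y ^ 2 / 2 ≤ cos x := by
  have hsq : x ^ 2 ≤ y ^ 2 := sq_le_sq' (abs_le.mp h).1 (abs_le.mp h).2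
  linarith [one_sub_sq_div_two_le_cos (x := x)]

/-- At `x = 0` the angle is the junk value `0 / 0 = 0`, whose cosine is still `1`. -/
lemma cos_two_pi_mul_div_self (x : ℝ) : cos (2 * π * x / x) = 1 := by
  rcases eq_or_ne x 0 with rfl | hx
  · simp
  · rw [mul_div_assoc, div_self hx, mul_one, cos_two_pi]

lemma div_le_one_div_of_mul_le {a b c : ℝ} (hb : 0 ≤ b) (hc : 0 < c) (h : c * a ≤ b) :
    a / b ≤ 1 / c := by
  refine div_le_of_le_mul₀ hb (by positivity) ?_
  rw [one_div_mul_eq_div, le_div_iff₀ hc]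
  linarith

lemma one_sub_two_mul_pi_sq_div_sq_le_cos {g m n : ℕ} (hn : 0 < n) (h : n * g ≤ m) :
    1 - 2 * π ^ 2 / (n : ℝ) ^ 2 ≤ cos (2 * π * g / m) := by
  have hq : (g : ℝ) / m ≤ 1 / n :=
    div_le_one_div_of_mul_le (by positivity) (by positivity) (by exact_mod_cast h)
  have habs : |2 * π * g / m| ≤ 2 * π / n := by
    rw [abs_of_nonneg (by positivity), mul_div_assoc]
    calc 2 * π * ((g : ℝ) / m) ≤ 2 * π * (1 / n) := by gcongr
      _ = 2 * π / n := by ring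
  calc 1 - 2 * π ^ 2 / (n : ℝ) ^ 2 = 1 - (2 * π / n) ^ 2 / 2 := by ring
    _ ≤ cos (2 * π * g / m) := one_sub_sq_div_two_le_cos_of_abs_le habs

lemma card_mul_sub_card_filter_mul_le_sum {ι : Type*} (s : Finset ι) (p : ι → Prop)
    [DecidablePred p] {f : ι → ℝ} {a d : ℝ} (hgood : ∀ i ∈ s, ¬ p i → a ≤ f i)
    (hbad : ∀ i ∈ s, p i → a - d ≤ f i) :
    #s * a - #(s.filter p) * d ≤ ∑ i ∈ s, f i := by
  calc (#s : ℝ) * a - #(s.filter p) * d = ∑ i ∈ s, (a - if p i then d else 0) := by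
        simp [sum_sub_distrib, sum_ite]
    _ ≤ ∑ i ∈ s, f i := sum_le_sum fun i hi => by
        split_ifs with hp
        · exact hbad i hi hp
        · simpa using hgood i hi hp

lemma re_ofReal_mul_sum_exp_mul_I {ι : Type*} (s : Finset ι) (c : ℝ) (θ : ι → ℝ) :
    ((c : ℂ) * ∑ i ∈ s, Complex.exp (θ i * Complex.I)).re = c * ∑ i ∈ s, cos (θ i) := by
  simp [Complex.re_sum, Complex.exp_ofReal_mul_I_re]

theorem eigenvalue_one_modulus_lower_bound_general
    (G : ℕ → ℕ)
    (n : ℕ) (hn : 2 ≤ n) (m : ℕ) (hm : m = G n)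
    (M : ℕ) (hM : M = ((Finset.Icc 1 (n - 1)).filter (fun i => G n < n * G i)).card) :
    1 - 2 * (M : ℝ) / n - 2 * π ^ 2 / (n : ℝ) ^ 2 ≤
      ‖(1 / n : ℂ) *
        ∑ i ∈ Finset.Icc 1 n, Complex.exp (2 * π * Complex.I * G i / m)‖ := by
  subst hm
  set θ : ℕ → ℝ := fun i => 2 * π * G i / G n
  set ε : ℝ := 2 * π ^ 2 / (n : ℝ) ^ 2
  have hn0 : (0 : ℝ) < n := by positivity
  have hε : 0 ≤ ε := by positivity
  have hsum : (1 / n : ℂ) * ∑ i ∈ Icc 1 n, Complex.exp (2 * π * Complex.I * G i / G n) =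
      ((1 / n : ℝ) : ℂ) * ∑ i ∈ Icc 1 n, Complex.exp (θ i * Complex.I) := by
    push_cast
    refine congrArg _ (sum_congr rfl fun i _ => ?_)
    simp only [θ]
    push_cast
    ring_nf
  have hlower : ((n - 1 : ℕ) : ℝ) * (1 - ε) - M * 2 ≤ ∑ i ∈ Icc 1 (n - 1), cos (θ i) := by
    have h := card_mul_sub_card_filter_mul_le_sum (Icc 1 (n - 1)) (fun i => G n < n * G i)
      (f := fun i => cos (θ i)) (a := 1 - ε) (d := 2)
      (fun i _ hi => one_sub_two_mul_pi_sq_div_sq_le_cos (by omega) (not_lt.mp hi))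
      (fun i _ _ => by linarith [neg_one_le_cos (θ i)])
    simpa [hM] using h
  have hsplit : ∑ i ∈ Icc 1 n, cos (θ i) = ∑ i ∈ Icc 1 (n - 1), cos (θ i) + cos (θ n) := by
    obtain ⟨k, rfl⟩ : ∃ k, n = k + 1 := ⟨n - 1, by omega⟩
    simp [sum_Icc_succ_top]
  rw [hsum]
  refine le_trans ?_ (Complex.re_le_norm _)
  rw [re_ofReal_mul_sum_exp_mul_I, hsplit, cos_two_pi_mul_div_self, one_div_mul_eq_div,
    le_div_iff₀ hn0]
  rw [Nat.cast_sub (by omega : 1 ≤ n), Nat.cast_one] at hlower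
  have hMn : 2 * (M : ℝ) / n * n = 2 * M := div_mul_cancel₀ _ hn0.ne'
  linarith

/-- Lower bound on the modulus of the eigenvalue `λ_1`:
`|λ_1| ≥ 1 - 2M/n - 2π²/n²`, where `M = #{1 ≤ i ≤ n-1 : n G i > G n}`. -/
theorem eigenvalue_one_modulus_lower_bound
    (G : ℕ → ℕ) (hGpos : ∀ i, 1 ≤ i → 0 < G i)
    (hmono : ∀ i, G i ≤ G (i + 1))
    (n : ℕ) (hn : 2 ≤ n) (m : ℕ) (hm : m = G n)
    (M : ℕ) (hM : M = ((Finset.Icc 1 (n - 1)).filter (fun i => G n < n * G i)).card) :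
    1 - 2 * (M : ℝ) / n - 2 * π ^ 2 / (n : ℝ) ^ 2 ≤
      ‖(1 / n : ℂ) *
        ∑ i ∈ Finset.Icc 1 n, Complex.exp (2 * π * Complex.I * G i / m)‖ :=
  eigenvalue_one_modulus_lower_bound_general G n hn m hm M hM
end

section
/- Let c ≥ 2 and n ≥ 2 be integers, set κ = 1/(1 − cos(π/c)), and let λ̃(n,k) = Σ_{i=0}^{n−1} exp(2π I k / c^i) where I = √(-1). Then for every natural number t ≥ 1, Σ_{k=1}^{c^{n−1}−1} (|λ̃(n,k)|/n)^{2t} ≤ (1 + (c−1)·exp(−t/(κ·n)))^{n−1} − 1. -/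
/-!
Write `λ̃(n, k) = ∑ zᵢ` with `zᵢ = exp (2πik / cⁱ)`. Pairing consecutive terms,
`2 ‖∑ zᵢ‖ ≤ 2 + ∑ⱼ ‖zⱼ + zⱼ₊₁‖` and `‖zⱼ + zⱼ₊₁‖ = 2 |cos (π k (c - 1) / cʲ⁺¹)|`, so
`‖λ̃‖ / n ≤ 1 - D / n ≤ exp (-D / n)` where `D = ∑ⱼ (1 - |cos (π k (c - 1) / cʲ⁺¹)|)` depends only
on `r = k (c - 1) mod cⁿ⁻¹`. As `c - 1` is a unit mod `cⁿ⁻¹`, `k ↦ r` permutes the nonzero residues.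
Expanding `r` in base `c`, the top digit `a` contributes a factor
`∑ₐ exp (-s (1 - |cos (π (v + a) / c)|)) ≤ 1 + (c - 1) exp (-s (1 - cos (π / c)) / 2)`:
the interior digits keep `(v + a) / c` at distance `≥ 1 / c` from the integers, and since
`1 - |cos (π x)|` is subadditive up to a factor `2`, at most one of the two extreme digits brings it
close to an integer. Induction on the number of digits gives the product bound.
-/

open Finset Real

lemma Finset.sum_range_mul_eq_sum_sum {M : Type*} [AddCommMonoid M] (f : ℕ → M) (a b : ℕ) :
    ∑ r ∈ range (a * b), f r = ∑ i ∈ range a, ∑ j ∈ range b, f (i * b + j) := by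
  induction a with
  | zero => simp
  | succ a ih => rw [Nat.succ_mul, sum_range_add, ih, sum_range_succ]

lemma Finset.sum_Ico_one_mul_mod_eq_of_coprime {M : Type*} [AddCommMonoid M] (f : ℕ → M)
    {a N : ℕ} (h : a.Coprime N) : ∑ k ∈ Ico 1 N, f (k * a % N) = ∑ k ∈ Ico 1 N, f k := by
  have hmaps : Set.MapsTo (· * a % N) (Ico 1 N : Set ℕ) (Ico 1 N) := fun k hk => by
    simp only [coe_Ico, Set.mem_Ico] at hk ⊢
    refine ⟨Nat.pos_of_ne_zero fun h0 => ?_, Nat.mod_lt _ (by omega)⟩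
    have := Nat.le_of_dvd (by omega) ((h.symm.dvd_of_dvd_mul_right (Nat.dvd_of_mod_eq_zero h0)))
    omega
  have hinj : Set.InjOn (· * a % N) (Ico 1 N : Set ℕ) := fun k hk l hl hkl => by
    simp only [coe_Ico, Set.mem_Ico] at hk hl
    have := Nat.ModEq.cancel_right_of_coprime h.symm hkl
    rwa [Nat.ModEq, Nat.mod_eq_of_lt hk.2, Nat.mod_eq_of_lt hl.2] at this
  exact sum_nbij _ hmaps hinj (surjOn_of_injOn_of_card_le _ hmaps hinj le_rfl) fun _ _ => rfl

lemma Complex.norm_exp_ofReal_mul_I_add_exp_ofReal_mul_I (x y : ℝ) :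
    ‖exp (x * I) + exp (y * I)‖ = 2 * |Real.cos ((x - y) / 2)| := by
  have hx : (x : ℂ) * I = ((x + y) / 2 : ℝ) * I + ((x - y) / 2 : ℝ) * I := by push_cast; ring
  have hy : (y : ℂ) * I = ((x + y) / 2 : ℝ) * I + -((x - y) / 2 : ℝ) * I := by push_cast; ring
  have : exp (x * I) + exp (y * I) =
      exp (((x + y) / 2 : ℝ) * I) * (2 * cos ((x - y) / 2 : ℝ)) := by
    rw [hx, hy, exp_add, exp_add, cos]
    ring
  rw [this, norm_mul, norm_exp_ofReal_mul_I, one_mul, ← ofReal_cos, norm_mul, norm_real]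
  norm_num

lemma two_mul_norm_sum_range_succ_le {E : Type*} [SeminormedAddCommGroup E] [NormedSpace ℝ E]
    (z : ℕ → E) (m : ℕ) :
    2 * ‖∑ i ∈ range (m + 1), z i‖ ≤ ‖z 0‖ + ‖z m‖ + ∑ j ∈ range m, ‖z j + z (j + 1)‖ := by
  have hsplit : (2 : ℝ) • ∑ i ∈ range (m + 1), z i =
      z 0 + z m + ∑ j ∈ range m, (z j + z (j + 1)) := by
    rw [two_smul, sum_add_distrib]
    nth_rw 1 [sum_range_succ]
    rw [sum_range_succ']
    abel
  calc 2 * ‖∑ i ∈ range (m + 1), z i‖ = ‖(2 : ℝ) • ∑ i ∈ range (m + 1), z i‖ := by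
        rw [norm_smul, Real.norm_two]
    _ ≤ _ := by
        rw [hsplit]
        exact (norm_add_le _ _).trans (add_le_add (norm_add_le _ _) (norm_sum_le _ _))

lemma pow_le_exp_neg_mul_of_le_one_sub {x y : ℝ} (hx : 0 ≤ x) (h : x ≤ 1 - y) (p : ℕ) :
    x ^ p ≤ exp (-(p * y)) :=
  calc x ^ p ≤ exp (-y) ^ p := pow_le_pow_left₀ hx (h.trans (one_sub_le_exp_neg y)) p
    _ = exp (-(p * y)) := by rw [← exp_nat_mul, mul_neg]

noncomputable def cosDefect (x : ℝ) : ℝ := 1 - |cos (π * x)|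

lemma cosDefect_nonneg (x : ℝ) : 0 ≤ cosDefect x :=
  sub_nonneg.mpr (abs_cos_le_one _)

lemma cosDefect_neg (x : ℝ) : cosDefect (-x) = cosDefect x := by
  simp only [cosDefect, mul_neg, cos_neg]

lemma cosDefect_periodic : Function.Periodic cosDefect 1 := fun x => by
  simp only [cosDefect, mul_add, mul_one, cos_add_pi, abs_neg]

lemma cosDefect_natCast_div_of_modEq {a b d : ℕ} (h : a ≡ b [MOD d]) :
    cosDefect (a / d) = cosDefect (b / d) := by
  rcases Nat.eq_zero_or_pos d with rfl | hd
  · simp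
  have key : ∀ x : ℕ, cosDefect (x / d) = cosDefect ((x % d : ℕ) / d) := fun x => by
    conv_lhs => rw [← Nat.mod_add_div x d]
    have : ((x % d + d * (x / d) : ℕ) : ℝ) / d = (x % d : ℕ) / d + (x / d : ℕ) * 1 := by
      push_cast; field_simp
    rw [this, cosDefect_periodic.nat_mul]
  rw [key a, key b, h]

lemma cosDefect_add_le (x y : ℝ) : cosDefect (x + y) ≤ 2 * (cosDefect x + cosDefect y) := by
  set a := π * x
  set b := π * y
  have hcos : |cos a| * |cos b| - |sin a| * |sin b| ≤ |cos (π * (x + y))| := by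
    rw [mul_add, cos_add, ← abs_mul, ← abs_mul]
    exact abs_sub_abs_le_abs_sub _ _
  simp only [cosDefect]
  nlinarith [sq_abs (sin a), sq_abs (sin b), sq_abs (cos a), sq_abs (cos b), sin_sq_add_cos_sq a,
    sin_sq_add_cos_sq b, sq_nonneg (|sin a| - |sin b|), sq_nonneg (2 - |cos a| - |cos b|)]

lemma cosDefect_le_of_mem_Icc {δ x : ℝ} (hδ₀ : 0 ≤ δ) (hlo : δ ≤ x) (hhi : x ≤ 1 - δ) :
    cosDefect δ ≤ cosDefect x := by
  have hπ := pi_pos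
  have hδ : δ ≤ 1 / 2 := by linarith
  have hcosδ : 0 ≤ cos (π * δ) := cos_nonneg_of_mem_Icc ⟨by nlinarith, by nlinarith⟩
  have hle : cos (π * x) ≤ cos (π * δ) :=
    cos_le_cos_of_nonneg_of_le_pi (by positivity) (by nlinarith) (by nlinarith)
  have hge : -cos (π * x) ≤ cos (π * δ) := by
    rw [← cos_pi_sub]
    exact cos_le_cos_of_nonneg_of_le_pi (by positivity) (by nlinarith) (by nlinarith)
  simp only [cosDefect, abs_of_nonneg hcosδ]
  linarith [abs_le.mpr ⟨neg_le.mp hge, hle⟩]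

lemma cosDefect_one_div_le {c : ℝ} (hc : c ≠ 0) (v : ℝ) :
    cosDefect (1 / c) ≤ 2 * (cosDefect (v / c) + cosDefect ((v + (c - 1)) / c)) := by
  have hend : cosDefect ((1 - v) / c) = cosDefect ((v + (c - 1)) / c) := by
    rw [← cosDefect_neg, ← cosDefect_periodic]
    congr 1
    field_simp
    ring
  have := cosDefect_add_le (v / c) ((1 - v) / c)
  rwa [← add_div, add_sub_cancel, hend] at this

lemma cosDefect_one_div {c : ℝ} (hc : 2 ≤ c) : cosDefect (1 / c) = 1 - cos (π / c) := by
  rw [cosDefect, mul_one_div, abs_of_nonneg]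
  have hπ := pi_pos
  refine cos_nonneg_of_mem_Icc ⟨?_, ?_⟩
  · linarith [div_nonneg hπ.le (by linarith : (0 : ℝ) ≤ c)]
  · rw [div_le_div_iff₀ (by linarith) two_pos]
    nlinarith

noncomputable def cosDefectSum (c m r : ℕ) : ℝ := ∑ j ∈ range m, cosDefect (r / c ^ (j + 1))

lemma cosDefectSum_congr_of_modEq {c m r r' : ℕ} (h : r ≡ r' [MOD c ^ m]) :
    cosDefectSum c m r = cosDefectSum c m r' := by
  refine sum_congr rfl fun j hj => ?_
  have := cosDefect_natCast_div_of_modEq (h.of_dvd (pow_dvd_pow c (mem_range.mp hj)))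
  exact_mod_cast this

lemma cosDefectSum_succ_add_mul {c : ℕ} (hc : c ≠ 0) (m r a : ℕ) :
    cosDefectSum c (m + 1) (a * c ^ m + r) =
      cosDefectSum c m r + cosDefect ((r / c ^ m + a) / c) := by
  have hlow : cosDefectSum c m (a * c ^ m + r) = cosDefectSum c m r :=
    cosDefectSum_congr_of_modEq (by rw [add_comm]; exact Nat.add_mul_modulus_modEq_iff.mpr rfl)
  rw [cosDefectSum, sum_range_succ, ← cosDefectSum, hlow]
  congr 2
  push_cast
  field_simp
  ring

lemma norm_sum_range_succ_cexp_le {c : ℕ} (hc : 0 < c) (k m : ℕ) :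
    ‖∑ i ∈ range (m + 1), Complex.exp (2 * π * Complex.I * k / c ^ i)‖ ≤
      m + 1 - cosDefectSum c m (k * (c - 1)) := by
  set z : ℕ → ℂ := fun i => Complex.exp ((2 * π * k / c ^ i : ℝ) * Complex.I)
  have hz : ∀ i, Complex.exp (2 * π * Complex.I * k / c ^ i) = z i := fun i => by
    simp only [z]
    push_cast
    ring_nf
  have hpair : ∀ j, ‖z j + z (j + 1)‖ = 2 * (1 - cosDefect ((k * (c - 1) : ℕ) / c ^ (j + 1))) :=
    fun j => by
      rw [Complex.norm_exp_ofReal_mul_I_add_exp_ofReal_mul_I, cosDefect, sub_sub_cancel]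
      congr 3
      rw [Nat.cast_mul, Nat.cast_sub hc, pow_succ]
      field_simp
      ring
  have hnorm : ∀ i, ‖z i‖ = 1 := fun i => Complex.norm_exp_ofReal_mul_I _
  clear_value z
  have := two_mul_norm_sum_range_succ_le z m
  rw [hnorm, hnorm, sum_congr rfl fun j _ => hpair j, ← mul_sum, sum_sub_distrib] at this
  simp only [sum_const, card_range, nsmul_eq_mul, mul_one] at this
  rw [sum_congr rfl fun i _ => hz i, cosDefectSum]
  linarith

lemma norm_sum_cexp_div_pow_le_exp {c n : ℕ} (hc : 0 < c) (hn : 0 < n) (k t : ℕ) :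
    (‖∑ i ∈ range n, Complex.exp (2 * π * Complex.I * k / c ^ i)‖ / n) ^ (2 * t) ≤
      exp (-(2 * t / n * cosDefectSum c (n - 1) (k * (c - 1)))) := by
  obtain ⟨m, rfl⟩ : ∃ m, n = m + 1 := ⟨n - 1, by omega⟩
  have h := norm_sum_range_succ_cexp_le hc k m
  have hle : ‖∑ i ∈ range (m + 1), Complex.exp (2 * π * Complex.I * k / c ^ i)‖ / (m + 1 : ℕ) ≤
      1 - cosDefectSum c m (k * (c - 1)) / (m + 1 : ℕ) := by
    rw [one_sub_div (by positivity), div_le_div_iff_of_pos_right (by positivity)]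
    push_cast
    linarith
  convert pow_le_exp_neg_mul_of_le_one_sub (by positivity) hle (2 * t) using 3
  push_cast
  ring

lemma sum_range_exp_neg_cosDefect_le {c : ℕ} (hc : 2 ≤ c) {s v : ℝ} (hs : 0 ≤ s) (hv₀ : 0 ≤ v)
    (hv₁ : v ≤ 1) :
    ∑ a ∈ range c, exp (-(s * cosDefect ((v + a) / c))) ≤
      1 + (c - 1) * exp (-(s * (cosDefect (1 / c) / 2))) := by
  obtain ⟨d, rfl⟩ : ∃ d, c = d + 2 := ⟨c - 2, by omega⟩
  set ε := exp (-(s * (cosDefect (1 / (d + 2 : ℕ)) / 2)))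
  have hmid : ∀ i ∈ range d, exp (-(s * cosDefect ((v + (i + 1 : ℕ)) / (d + 2 : ℕ)))) ≤ ε := by
    intro i hi
    have hi : (i : ℝ) + 1 ≤ d := by exact_mod_cast mem_range.mp hi
    have hlo : cosDefect (1 / (d + 2 : ℕ)) ≤ cosDefect ((v + (i + 1 : ℕ)) / (d + 2 : ℕ)) := by
      apply cosDefect_le_of_mem_Icc (by positivity) <;> push_cast <;> field_simp <;> linarith
    exact exp_le_exp.mpr (by nlinarith [cosDefect_nonneg (1 / (d + 2 : ℕ))])
  have hends : exp (-(s * cosDefect ((v + (d + 1 : ℕ)) / (d + 2 : ℕ)))) +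
      exp (-(s * cosDefect ((v + (0 : ℕ)) / (d + 2 : ℕ)))) ≤ 1 + ε := by
    have hpair := cosDefect_one_div_le (c := ((d + 2 : ℕ) : ℝ)) (by positivity) v
    rw [show ((d + 2 : ℕ) : ℝ) - 1 = (d + 1 : ℕ) by push_cast; ring] at hpair
    rw [Nat.cast_zero, add_zero]
    set X := exp (-(s * cosDefect ((v + (d + 1 : ℕ)) / (d + 2 : ℕ))))
    set Y := exp (-(s * cosDefect (v / (d + 2 : ℕ))))
    have hle_one : ∀ x, exp (-(s * cosDefect x)) ≤ 1 :=
      fun x => exp_le_one_iff.mpr (neg_nonpos.mpr (mul_nonneg hs (cosDefect_nonneg x)))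
    have hX : X ≤ 1 := hle_one _
    have hY : Y ≤ 1 := hle_one _
    have hXY : X * Y ≤ ε := by
      rw [← exp_add]
      exact exp_le_exp.mpr (by nlinarith)
    -- `X + Y ≤ 1 + X * Y` for `X, Y ≤ 1`
    nlinarith [mul_nonneg (sub_nonneg.mpr hX) (sub_nonneg.mpr hY)]
  rw [sum_range_succ, sum_range_succ']
  calc _ ≤ ∑ i ∈ range d, ε + (1 + ε) := by
        rw [add_assoc, add_comm (exp _)]
        exact add_le_add (sum_le_sum hmid) hends
    _ = _ := by
        rw [sum_const, card_range, nsmul_eq_mul]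
        push_cast
        ring

lemma sum_range_pow_exp_neg_cosDefectSum_le {c : ℕ} (hc : 2 ≤ c) {s : ℝ} (hs : 0 ≤ s) (m : ℕ) :
    ∑ r ∈ range (c ^ m), exp (-(s * cosDefectSum c m r)) ≤
      (1 + (c - 1) * exp (-(s * (cosDefect (1 / c) / 2)))) ^ m := by
  induction m with
  | zero => simp [cosDefectSum]
  | succ m ih =>
    set ε := exp (-(s * (cosDefect (1 / c) / 2)))
    have hε : 0 ≤ 1 + (c - 1) * ε := by
      have : (2 : ℝ) ≤ c := by exact_mod_cast hc
      nlinarith [exp_pos (-(s * (cosDefect (1 / c) / 2)))]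
    have hc₀ : c ≠ 0 := by omega
    calc ∑ r ∈ range (c ^ (m + 1)), exp (-(s * cosDefectSum c (m + 1) r))
        = ∑ r ∈ range (c ^ m), exp (-(s * cosDefectSum c m r)) *
            ∑ a ∈ range c, exp (-(s * cosDefect ((r / c ^ m + a) / c))) := by
          rw [pow_succ', sum_range_mul_eq_sum_sum, sum_comm]
          simp only [cosDefectSum_succ_add_mul hc₀, mul_add, neg_add, exp_add, mul_sum]
      _ ≤ ∑ r ∈ range (c ^ m), exp (-(s * cosDefectSum c m r)) * (1 + (c - 1) * ε) := by
          refine sum_le_sum fun r hr => mul_le_mul_of_nonneg_left ?_ (exp_pos _).le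
          have hr : (r : ℝ) < c ^ m := by exact_mod_cast mem_range.mp hr
          exact sum_range_exp_neg_cosDefect_le hc hs (by positivity)
            (div_le_one_of_le₀ hr.le (by positivity))
      _ ≤ (1 + (c - 1) * ε) ^ (m + 1) := by
          rw [← sum_mul, pow_succ]
          exact mul_le_mul_of_nonneg_right ih hε

theorem eigenvalue_power_sum_bound_general
    (c n : ℕ) (hc : 2 ≤ c)
    (κ : ℝ) (hκ : κ = 1 / (1 - Real.cos (π / c)))
    (t : ℕ) :
    ∑ k ∈ Finset.Icc 1 (c ^ (n - 1) - 1),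
        (‖∑ i ∈ Finset.range n, Complex.exp (2 * π * Complex.I * k / c ^ i)‖
          / n) ^ (2 * t) ≤
      (1 + ((c : ℝ) - 1) * Real.exp (-(t : ℝ) / (κ * n))) ^ (n - 1) - 1 := by
  rcases Nat.eq_zero_or_pos n with rfl | hn
  · simp
  set N := c ^ (n - 1)
  set W : ℕ → ℝ := fun r => exp (-(2 * t / n * cosDefectSum c (n - 1) r))
  have hN : 0 < N := by positivity
  have hcop : (c - 1).Coprime N :=
    Nat.Coprime.pow_right _ ((Nat.coprime_self_sub_left (by omega)).mpr (Nat.coprime_one_left c))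
  have hε : exp (-(2 * t / n * (cosDefect (1 / c) / 2))) = exp (-t / (κ * n)) := by
    rw [cosDefect_one_div (by exact_mod_cast hc), hκ]
    congr 1
    field_simp
  calc _ ≤ ∑ k ∈ Ico 1 N, W (k * (c - 1) % N) := by
        rw [Icc_sub_one_right_eq_Ico_of_not_isMin (by simpa using hN.ne')]
        refine sum_le_sum fun k _ => ?_
        rw [show W (k * (c - 1) % N) = W (k * (c - 1)) by
          simp only [W, cosDefectSum_congr_of_modEq (Nat.mod_modEq (k * (c - 1)) N)]]
        exact norm_sum_cexp_div_pow_le_exp (by omega) hn k t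
    _ = ∑ k ∈ Ico 1 N, W k := sum_Ico_one_mul_mod_eq_of_coprime W hcop
    _ = ∑ k ∈ range N, W k - 1 := by
        rw [sum_range_eq_add_Ico _ hN]
        simp [W, cosDefectSum, cosDefect]
    _ ≤ _ := by
        rw [← hε]
        gcongr
        exact sum_range_pow_exp_neg_cosDefectSum_le hc (by positivity) (n - 1)

/-- Eigenvalue-sum estimate for the random walk determined by `G i = c^(i-1)`:
`Σ_{k=1}^{c^(n-1)-1} (|λ̃(n,k)|/n)^(2t) ≤ (1 + (c-1)e^(-t/(κn)))^(n-1) - 1`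
with `κ = 1/(1 - cos(π/c))`. -/
theorem eigenvalue_power_sum_bound
    (c n : ℕ) (hc : 2 ≤ c) (hn : 2 ≤ n)
    (κ : ℝ) (hκ : κ = 1 / (1 - Real.cos (π / c)))
    (t : ℕ) (ht : 1 ≤ t) :
    ∑ k ∈ Finset.Icc 1 (c ^ (n - 1) - 1),
        (‖∑ i ∈ Finset.range n, Complex.exp (2 * π * Complex.I * k / c ^ i)‖
          / n) ^ (2 * t) ≤
      (1 + ((c : ℝ) - 1) * Real.exp (-(t : ℝ) / (κ * n))) ^ (n - 1) - 1 :=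
  eigenvalue_power_sum_bound_general c n hc κ hκ t
end

section
/- Let c ≥ 2 and n ≥ 2 be integers, set m = c^{n−1}, and let λ_k = (1/n)·Σ_{i=1}^{n} exp(2π I k c^{i−1} / m) be the eigenvalues of the random walk on ℤ_m determined by G i = c^{i−1}, where I = √(-1). Then λ_{c^{n−2}} = (exp(2π I / c) + (n − 1))/n, and |λ_{c^{n−2}}| ≥ 1 − (1 − cos(2π/c))/n. -/
open Finset Real

/-!
Write `m = c^(n-1)`. For `k = c^(n-2)` the phase of the `i`-th summand is `c^(n-2) c^(i-1) / m`:
it is `1/c` for `i = 1` and the integer `c^(i-2)` for `i ≥ 2`. So one summand is the `c`-th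
root of unity `exp(2πI/c)` and the other `n - 1` equal `1`. Comparing the modulus of
`exp(2πI/c) + (n - 1)` with its real part `cos(2π/c) + n - 1` gives the bound.
-/

lemma pow_div_pow_succ {G : Type*} [CommGroupWithZero G] (x : G) (k : ℕ) :
    x ^ k / x ^ (k + 1) = x⁻¹ := by
  rcases eq_or_ne x 0 with rfl | hx
  · simp
  · rw [pow_succ, div_mul_cancel_left₀ (pow_ne_zero k hx)]

lemma Complex.exp_two_pi_I_mul_natCast_mul_div_self (k : ℕ) (a : ℂ) :
    Complex.exp (2 * π * Complex.I * k * a / a) = 1 := by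
  rcases eq_or_ne a 0 with rfl | ha
  · simp
  · rw [mul_div_cancel_right₀ _ ha, mul_comm, Complex.exp_nat_mul_two_pi_mul_I]

lemma one_sub_div_le_norm_exp_mul_I_add_div (θ : ℝ) {n : ℕ} (hn : 1 ≤ n) :
    1 - (1 - Real.cos θ) / n ≤ ‖(Complex.exp (θ * Complex.I) + ((n : ℂ) - 1)) / n‖ := by
  have hnR : (0 : ℝ) < n := by exact_mod_cast hn
  calc 1 - (1 - Real.cos θ) / n = (Complex.exp (θ * Complex.I) + ((n : ℂ) - 1)).re / n := by
        rw [Complex.add_re, Complex.exp_ofReal_mul_I_re, Complex.sub_re, Complex.natCast_re,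
          Complex.one_re]
        field_simp
        ring
    _ ≤ ‖Complex.exp (θ * Complex.I) + ((n : ℂ) - 1)‖ / n := by
        gcongr
        exact Complex.re_le_norm _
    _ = ‖(Complex.exp (θ * Complex.I) + ((n : ℂ) - 1)) / n‖ := by
        rw [norm_div, Complex.norm_natCast]

/-- The eigenvalue `λ_k` of the random walk on `ℤ / c^(n-1)` whose steps are uniform on
`{1, c, …, c^(n-1)}`. -/
noncomputable def geometricWalkEigenvalue (c n k : ℕ) : ℂ :=
  (1 / n : ℂ) * ∑ i ∈ Icc 1 n,
    Complex.exp (2 * π * Complex.I * k * (c ^ (i - 1) : ℕ) / (c ^ (n - 1) : ℕ))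

section GeometricWalk

variable {c n : ℕ}

lemma exp_geometricPhase_one (hn : 2 ≤ n) :
    Complex.exp (2 * π * Complex.I * (c ^ (n - 2) : ℕ) * (c ^ (1 - 1) : ℕ) /
      (c ^ (n - 1) : ℕ)) = Complex.exp (2 * π * Complex.I / c) := by
  obtain ⟨k, rfl⟩ := Nat.exists_eq_add_of_le hn
  rw [Nat.add_sub_cancel_left, show 2 + k - 1 = k + 1 by omega, Nat.sub_self, pow_zero,
    Nat.cast_one, mul_one, Nat.cast_pow, Nat.cast_pow, mul_div_assoc, pow_div_pow_succ,
    div_eq_mul_inv]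

lemma exp_geometricPhase_eq_one {i : ℕ} (hn : 2 ≤ n) (hi : 2 ≤ i) :
    Complex.exp (2 * π * Complex.I * (c ^ (n - 2) : ℕ) * (c ^ (i - 1) : ℕ) /
      (c ^ (n - 1) : ℕ)) = 1 := by
  have hexp : c ^ (n - 2) * c ^ (i - 1) = c ^ (i - 2) * c ^ (n - 1) := by
    rw [← pow_add, ← pow_add]
    congr 1
    omega
  rw [mul_assoc _ (_ : ℂ), ← Nat.cast_mul, hexp, Nat.cast_mul, ← mul_assoc]
  exact Complex.exp_two_pi_I_mul_natCast_mul_div_self _ _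

lemma geometricWalkEigenvalue_pow_sub_two (hn : 2 ≤ n) :
    geometricWalkEigenvalue c n (c ^ (n - 2)) =
      (Complex.exp (2 * π * Complex.I / c) + ((n : ℂ) - 1)) / n := by
  rw [geometricWalkEigenvalue, ← insert_Icc_add_one_left_eq_Icc (by omega : 1 ≤ n),
    sum_insert (by simp), exp_geometricPhase_one hn,
    sum_congr (s₁ := Icc (1 + 1) n) rfl fun i hi =>
      exp_geometricPhase_eq_one hn (mem_Icc.mp hi).1]
  have hcard : ((Icc (1 + 1) n).card : ℂ) = n - 1 := by
    rw [Nat.card_Icc, show n + 1 - (1 + 1) = n - 1 by omega, Nat.cast_sub (by omega : 1 ≤ n),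
      Nat.cast_one]
  rw [sum_const, nsmul_eq_mul, mul_one, hcard, one_div_mul_eq_div]

end GeometricWalk

theorem special_eigenvalue_geometric_general
    (c n : ℕ) (hn : 2 ≤ n) (m : ℕ) (hm : m = c ^ (n - 1)) :
    (1 / n : ℂ) * ∑ i ∈ Finset.Icc 1 n,
        Complex.exp (2 * π * Complex.I * (c ^ (n - 2) : ℕ) * (c ^ (i - 1) : ℕ) / m) =
      (Complex.exp (2 * π * Complex.I / c) + ((n : ℂ) - 1)) / n ∧
    1 - (1 - Real.cos (2 * π / c)) / n ≤
      ‖(Complex.exp (2 * π * Complex.I / c) + ((n : ℂ) - 1)) / n‖ := by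
  subst hm
  have hθ : 2 * π * Complex.I / c = ((2 * π / c : ℝ) : ℂ) * Complex.I := by
    push_cast
    ring
  refine ⟨geometricWalkEigenvalue_pow_sub_two hn, ?_⟩
  rw [hθ]
  exact one_sub_div_le_norm_exp_mul_I_add_div _ (by omega)

/-- The eigenvalue with index `k = c^(n-2)` of the random walk determined by
`G i = c^(i-1)` equals `(exp(2πI/c) + (n-1))/n`, and its modulus is at least
`1 - (1 - cos(2π/c))/n`. -/
theorem special_eigenvalue_geometric
    (c n : ℕ) (hc : 2 ≤ c) (hn : 2 ≤ n) (m : ℕ) (hm : m = c ^ (n - 1)) :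
    (1 / n : ℂ) * ∑ i ∈ Finset.Icc 1 n,
        Complex.exp (2 * π * Complex.I * (c ^ (n - 2) : ℕ) * (c ^ (i - 1) : ℕ) / m) =
      (Complex.exp (2 * π * Complex.I / c) + ((n : ℂ) - 1)) / n ∧
    1 - (1 - Real.cos (2 * π / c)) / n ≤
      ‖(Complex.exp (2 * π * Complex.I / c) + ((n : ℂ) - 1)) / n‖ :=
  special_eigenvalue_geometric_general c n hn m hm
end

section
/- Let c ≥ 2 be an integer, fix an integer n ≥ 2, and consider the random walk on ℤ_m for m = c^{n−1} determined by the sequence G i = c^{i−1} (i = 1, …, n), with t-step distribution p and uniform distribution π. Set γ = 1/(1 − cos(2π/c)). Then for every real ε with 0 < ε < 1/2 and every natural number t, if (1/2)·Σ_{x ∈ ZMod m} |p t x − π x| ≤ ε then t ≥ (γ·n − 1)·log(1/(2ε)). -/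
open Finset Real

/-!
For a nontrivial character `ψ` of `ℤ_m`, the Fourier coefficient of `p t` at `ψ` is `μ̂(ψ) ^ t`,
and since `∑ₓ ψ x = 0` it is also the coefficient of `p t - π`, so `‖μ̂(ψ)‖ ^ t ≤ 2 ‖p t - π‖_TV`.
Take for `ψ` the character `x ↦ exp (2πi x / c)`, which factors through `ℤ_c` because `c ∣ m`.
It kills every step `c ^ (i - 1)` with `i ≥ 2`, so `μ̂(ψ) = (n - 1 + exp (2πi / c)) / n`, whose
real part is `r = 1 - 1 / (γ n)`. Hence `r ^ t ≤ 2ε`, and `log (1 / r) ≤ 1 / r - 1 = 1 / (γ n - 1)`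
turns this into the bound on `t`.
-/

section CharacterSums

variable {α : Type*} [AddCommGroup α] [Fintype α]

theorem sum_convolution_mul_addChar (f g : α → ℝ) (ψ : AddChar α ℂ) :
    ∑ x, ((∑ y, f y * g (x - y) : ℝ) : ℂ) * ψ x
      = (∑ y, (f y : ℂ) * ψ y) * ∑ z, (g z : ℂ) * ψ z := by
  rw [Finset.sum_mul_sum]
  push_cast
  simp only [Finset.sum_mul]
  rw [Finset.sum_comm]
  refine Finset.sum_congr rfl fun y _ => ?_
  refine Fintype.sum_equiv (Equiv.subRight y) _ _ fun x => ?_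
  rw [Equiv.subRight_apply, show x = y + (x - y) by abel, AddChar.map_add_eq_mul,
    add_sub_cancel_left]
  ring

theorem norm_sum_mul_addChar_le_sum_abs_sub {ψ : AddChar α ℂ} (hψ : ψ ≠ 1) (f : α → ℝ) (a : ℝ) :
    ‖∑ x, (f x : ℂ) * ψ x‖ ≤ ∑ x, |f x - a| := by
  have hshift : ∑ x, (f x : ℂ) * ψ x = ∑ x, ((f x - a : ℝ) : ℂ) * ψ x := by
    simp only [Complex.ofReal_sub, sub_mul, Finset.sum_sub_distrib, ← Finset.mul_sum,
      AddChar.sum_eq_zero_of_ne_one hψ, mul_zero, sub_zero]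
  rw [hshift]
  refine (norm_sum_le _ _).trans_eq (Finset.sum_congr rfl fun x _ => ?_)
  rw [norm_mul, AddChar.norm_apply, mul_one, Complex.norm_real, Real.norm_eq_abs]

end CharacterSums

section RandomWalk

variable (G : ℕ → ℕ) (n m : ℕ) [NeZero m] (ψ : AddChar (ZMod m) ℂ)

theorem sum_walkDist_mul_addChar (t : ℕ) :
    ∑ x, (walkDist G n m t x : ℂ) * ψ x = (∑ x, (stepDist G n m x : ℂ) * ψ x) ^ t := by
  induction t with
  | zero => simp [walkDist, apply_ite Complex.ofReal]
  | succ t ih => rw [pow_succ, ← ih, ← sum_convolution_mul_addChar]; rfl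

theorem sum_stepDist_mul_addChar :
    ∑ x, (stepDist G n m x : ℂ) * ψ x = (n : ℂ)⁻¹ * ∑ i ∈ Icc 1 n, ψ (G i) := by
  rw [← Finset.sum_fiberwise (Icc 1 n) (fun i => (G i : ZMod m)), Finset.mul_sum]
  refine Finset.sum_congr rfl fun x _ => ?_
  rw [Finset.sum_congr rfl fun i hi => by rw [(Finset.mem_filter.mp hi).2], Finset.sum_const,
    nsmul_eq_mul, stepDist]
  push_cast
  ring

theorem norm_sum_stepDist_mul_addChar_pow_le (hψ : ψ ≠ 1) (t : ℕ) :
    ‖∑ x, (stepDist G n m x : ℂ) * ψ x‖ ^ t ≤ ∑ x, |walkDist G n m t x - 1 / m| := by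
  rw [← norm_pow, ← sum_walkDist_mul_addChar]
  exact norm_sum_mul_addChar_le_sum_abs_sub hψ _ _

end RandomWalk

theorem sum_Icc_addChar_geometric {m c : ℕ} (ψ : AddChar (ZMod m) ℂ) (hψc : ψ c = 1) {n : ℕ}
    (hn : 1 ≤ n) : ∑ i ∈ Icc 1 n, ψ ((c ^ (i - 1) : ℕ) : ZMod m) = ψ 1 + (n - 1) := by
  have hsteps : ∀ i ∈ Icc (1 + 1) n, ψ ((c ^ (i - 1) : ℕ) : ZMod m) = 1 := fun i hi => by
    obtain ⟨k, rfl⟩ := Nat.exists_eq_add_of_le (Finset.mem_Icc.mp hi).1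
    rw [show 1 + 1 + k - 1 = k + 1 by omega, pow_succ, Nat.cast_mul, ← nsmul_eq_mul,
      AddChar.map_nsmul_eq_pow, hψc, one_pow]
  rw [← Finset.insert_Icc_add_one_left_eq_Icc hn, Finset.sum_insert (by simp),
    Finset.sum_congr rfl hsteps]
  simp [Nat.cast_sub hn]

/-- The character `x ↦ exp (2πi x / c)` of `ℤ_m`, well defined because it factors through `ℤ_c`. -/
noncomputable def stdAddCharOfDvd {c m : ℕ} [NeZero c] (h : c ∣ m) : AddChar (ZMod m) ℂ :=
  ZMod.stdAddChar.compAddMonoidHom (ZMod.castHom h (ZMod c)).toAddMonoidHom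

section StdAddCharOfDvd

variable {c m : ℕ} [NeZero c] (h : c ∣ m)

theorem stdAddCharOfDvd_apply (x : ZMod m) :
    stdAddCharOfDvd h x = ZMod.stdAddChar (ZMod.castHom h (ZMod c) x) :=
  rfl

theorem stdAddCharOfDvd_natCast_self : stdAddCharOfDvd h c = 1 := by
  rw [stdAddCharOfDvd_apply, map_natCast, ZMod.natCast_self, AddChar.map_zero_eq_one]

theorem stdAddCharOfDvd_one_re : (stdAddCharOfDvd h 1).re = cos (2 * π / c) := by
  have := ZMod.stdAddChar_coe (N := c) 1
  rw [Int.cast_one, Int.cast_one, mul_one, show 2 * π * Complex.I / c = ↑(2 * π / c) * Complex.I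
    by push_cast; ring] at this
  rw [stdAddCharOfDvd_apply, map_one, this, Complex.exp_ofReal_mul_I_re]

theorem stdAddCharOfDvd_ne_one (hc : 1 < c) : stdAddCharOfDvd h ≠ 1 := by
  have : Fact (1 < c) := ⟨hc⟩
  refine AddChar.ne_one_iff.mpr ⟨1, fun h1 => one_ne_zero (α := ZMod c)
    (ZMod.injective_stdAddChar ?_)⟩
  rwa [stdAddCharOfDvd_apply, map_one, ← AddChar.map_zero_eq_one (ZMod.stdAddChar (N := c))] at h1

end StdAddCharOfDvd

theorem sub_one_mul_log_one_div_le {g δ : ℝ} {t : ℕ} (hg : 1 ≤ g) (h : (1 - 1 / g) ^ t ≤ δ) :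
    (g - 1) * log (1 / δ) ≤ t := by
  rcases hg.eq_or_lt with rfl | hg
  · simp
  set r := 1 - 1 / g with hr_def
  have hr : 0 < r := by
    have : 1 / g < 1 := (div_lt_one (by linarith)).mpr hg
    linarith
  have hδ : 0 < δ := (pow_pos hr t).trans_le h
  have hlog : log (1 / δ) ≤ t * log (1 / r) := by
    rw [one_div, log_inv, one_div, log_inv, mul_neg, neg_le_neg_iff, ← log_pow]
    exact log_le_log (pow_pos hr t) h
  have hr' : 1 / r - 1 = 1 / (g - 1) := by
    rw [hr_def]
    field_simp
    ring
  calc (g - 1) * log (1 / δ) ≤ (g - 1) * (t * (1 / r - 1)) := by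
        gcongr
        exact hlog.trans (mul_le_mul_of_nonneg_left (log_le_sub_one_of_pos (by positivity))
          t.cast_nonneg)
    _ = t := by rw [hr']; field_simp [(by linarith : g - 1 ≠ 0)]

theorem cos_two_pi_div_lt_one {c : ℝ} (hc : 1 < c) : cos (2 * π / c) < 1 := by
  have hθ : 0 < 2 * π / c := by positivity
  refine (cos_le_one _).lt_of_ne fun h => hθ.ne' ?_
  rwa [cos_eq_one_iff_of_lt_of_lt (by linarith [pi_pos])
    ((div_lt_iff₀ (by positivity)).mpr (by nlinarith [pi_pos]))] at h

theorem re_sum_stepDist_geometric_mul_stdAddCharOfDvd {c m n : ℕ} [NeZero c] [NeZero m]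
    (h : c ∣ m) (hn : 1 ≤ n) :
    (∑ x, (stepDist (fun i => c ^ (i - 1)) n m x : ℂ) * stdAddCharOfDvd h x).re
      = 1 - (1 - cos (2 * π / c)) / n := by
  rw [sum_stepDist_mul_addChar, sum_Icc_addChar_geometric _ (stdAddCharOfDvd_natCast_self h) hn,
    ← Complex.ofReal_natCast, ← Complex.ofReal_inv, Complex.re_ofReal_mul, ← Complex.ofReal_one,
    ← Complex.ofReal_sub, Complex.add_re, Complex.ofReal_re, stdAddCharOfDvd_one_re]
  field_simp
  ring

theorem mixing_time_lower_bound_geometric_general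
    (c : ℕ) (hc : 2 ≤ c) (n : ℕ) (hn : 2 ≤ n)
    (m : ℕ) [NeZero m] (hm : m = c ^ (n - 1))
    (γ : ℝ) (hγ : γ = 1 / (1 - Real.cos (2 * π / c)))
    (ε : ℝ) (t : ℕ)
    (hTV : (1 / 2 : ℝ) * ∑ x : ZMod m,
        |walkDist (fun i => c ^ (i - 1)) n m t x - 1 / m| ≤ ε) :
    (γ * n - 1) * Real.log (1 / (2 * ε)) ≤ t := by
  have : NeZero c := ⟨by omega⟩
  have hcm : c ∣ m := hm ▸ dvd_pow_self c (by omega)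
  set μ := ∑ x, (stepDist (fun i => c ^ (i - 1)) n m x : ℂ) * stdAddCharOfDvd hcm x
  have hre : μ.re = 1 - 1 / (γ * n) := by
    rw [re_sum_stepDist_geometric_mul_stdAddCharOfDvd hcm (by omega), hγ, one_div_mul_eq_div,
      one_div_div]
  have hγn : 1 ≤ γ * n := by
    have hcos := cos_two_pi_div_lt_one (c := c) (by exact_mod_cast hc)
    have hn' : (2 : ℝ) ≤ n := by exact_mod_cast hn
    rw [hγ, one_div_mul_eq_div, le_div_iff₀ (by linarith)]
    linarith [neg_one_le_cos (2 * π / c)]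
  refine sub_one_mul_log_one_div_le hγn ?_
  calc (1 - 1 / (γ * n)) ^ t ≤ ‖μ‖ ^ t :=
        pow_le_pow_left₀ (sub_nonneg.mpr (div_le_one_of_le₀ hγn (by positivity)))
          (hre ▸ Complex.re_le_norm μ) t
    _ ≤ ∑ x : ZMod m, |walkDist (fun i => c ^ (i - 1)) n m t x - 1 / m| :=
        norm_sum_stepDist_mul_addChar_pow_le _ n m _ (stdAddCharOfDvd_ne_one hcm (by omega)) t
    _ ≤ 2 * ε := by linarith

/-- Mixing-time lower bound for first order recurrences:
`t_mix(ε) ≥ (γ n - 1) log(1/(2ε))` with `γ = 1/(1 - cos(2π/c))`. -/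
theorem mixing_time_lower_bound_geometric
    (c : ℕ) (hc : 2 ≤ c) (n : ℕ) (hn : 2 ≤ n)
    (m : ℕ) [NeZero m] (hm : m = c ^ (n - 1))
    (γ : ℝ) (hγ : γ = 1 / (1 - Real.cos (2 * π / c)))
    (ε : ℝ) (hε0 : 0 < ε) (hε : ε < 1 / 2) (t : ℕ)
    (hTV : (1 / 2 : ℝ) * ∑ x : ZMod m,
        |walkDist (fun i => c ^ (i - 1)) n m t x - 1 / m| ≤ ε) :
    (γ * n - 1) * Real.log (1 / (2 * ε)) ≤ t :=
  mixing_time_lower_bound_geometric_general c hc n hn m hm γ hγ ε t hTV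
end
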